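/- arXiv:1208.5011 — 2 statements merged into one kernel-verified Lean document; each statement's English description precedes it below -/
import Mathlib

section
/- The combined error satisfies √(‖u - u_N‖_X² + ‖p - p_N‖_Y²) ≤ √((Δᵘ)² + (Δᵖ)²), where Δᵘ = ‖r¹‖_{X'}/α_a + √(γ_a/α_a)·‖r²‖_{Y'}/β and Δᵖ = (1 + √(γ_a/α_a))·‖r¹‖_{X'}/β + (γ_a/β²)·‖r²‖_{Y'}. -/
/-!
Write `e = u - u_N` and `ε = p - p_N`; then `a(e,v) + b(v,ε) = r¹(v)` and `b(e,q) = r²(q)`.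
The inf-sup condition makes the Schur complement `B A⁻¹ Bᵀ` positive definite, so there is
`w = A⁻¹ Bᵀ q₀` with `b(w,·) = b(e,·)`, and the inf-sup condition bounds its energy by
`a(w,w) ≤ γ ‖r²‖² / β²`. The remainder `z = e - w` lies in the kernel of `B` and is
`a`-orthogonal to `w`, so `a(z,z) = r¹(z)` and `‖z‖ ≤ ‖r¹‖ / α`. This bounds both `‖e‖` and
`a(e,e) = a(z,z) + a(w,w)`; the pressure error follows from the inf-sup condition applied to
`b(v,ε) = r¹(v) - a(e,v)` together with `a(e,v) ≤ √(γ a(e,e)) ‖v‖`.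
-/

open LinearMap (BilinForm)

lemma iSup_div_norm_le {E : Type*} [NormedAddCommGroup E] {φ : E → ℝ} {c : ℝ} (hc : 0 ≤ c)
    (h : ∀ v, φ v ≤ c * ‖v‖) : ⨆ v : {v : E // v ≠ 0}, φ v / ‖v.1‖ ≤ c :=
  Real.iSup_le (fun v => (div_le_iff₀ (norm_pos_iff.2 v.2)).2 (h v)) hc

lemma ContinuousLinearMap.iSup_div_norm_eq_norm {E : Type*} [NormedAddCommGroup E]
    [NormedSpace ℝ E] (ℓ : E →L[ℝ] ℝ) : ⨆ v : {v : E // v ≠ 0}, ℓ v / ‖v.1‖ = ‖ℓ‖ := by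
  have hℓ (v : E) : ℓ v ≤ ‖ℓ‖ * ‖v‖ := (le_abs_self _).trans (ℓ.le_opNorm v)
  refine le_antisymm (iSup_div_norm_le (norm_nonneg ℓ) hℓ) ?_
  set R := ⨆ v : {v : E // v ≠ 0}, ℓ v / ‖v.1‖
  have hbdd : BddAbove (Set.range fun v : {v : E // v ≠ 0} => ℓ v / ‖v.1‖) :=
    ⟨‖ℓ‖, Set.forall_mem_range.2 fun v => (div_le_iff₀ (norm_pos_iff.2 v.2)).2 (hℓ v)⟩
  have hle (v : E) : ℓ v ≤ R * ‖v‖ := by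
    rcases eq_or_ne v 0 with rfl | hv
    · simp
    · exact (div_le_iff₀ (norm_pos_iff.2 hv)).1 (le_ciSup hbdd ⟨v, hv⟩)
  have habs (v : E) : ‖ℓ v‖ ≤ R * ‖v‖ := by
    have hneg := hle (-v)
    rw [map_neg, norm_neg] at hneg
    exact abs_le.2 ⟨by linarith, hle v⟩
  have hR : 0 ≤ R := by
    rcases isEmpty_or_nonempty {v : E // v ≠ 0} with hE | ⟨v, hv⟩
    · simp [R]
    · exact nonneg_of_mul_nonneg_left ((norm_nonneg _).trans (habs v)) (norm_pos_iff.2 hv)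
  exact ℓ.opNorm_le_bound hR habs

namespace LinearMap.BilinForm

variable {X : Type*} [NormedAddCommGroup X] [NormedSpace ℝ X] {a : BilinForm ℝ X} {α γ : ℝ}

lemma apply_le_sqrt_mul_norm (ha_symm : LinearMap.IsSymm a) (ha_nonneg : ∀ v, 0 ≤ a v v)
    (ha_cont : ∀ w v, a w v ≤ γ * ‖w‖ * ‖v‖) (w v : X) : a w v ≤ √(γ * a w w) * ‖v‖ :=
  calc a w v ≤ √(a w w * a v v) :=
        Real.le_sqrt_of_sq_le (a.apply_sq_le_of_symm ha_nonneg ha_symm w v)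
    _ ≤ √(γ * a w w * ‖v‖ ^ 2) := Real.sqrt_le_sqrt <| by
        nlinarith [mul_le_mul_of_nonneg_left (ha_cont v v) (ha_nonneg w)]
    _ = √(γ * a w w) * ‖v‖ := by
        rw [Real.sqrt_mul' _ (sq_nonneg _), Real.sqrt_sq (norm_nonneg v)]

lemma nondegenerate_of_coercive (ha_symm : LinearMap.IsSymm a) (hα : 0 < α)
    (ha_coer : ∀ v, α * ‖v‖ ^ 2 ≤ a v v) : a.Nondegenerate :=
  (a.nondegenerate_iff' (fun v => le_trans (by positivity) (ha_coer v)) ha_symm).2 fun v hv =>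
    (mul_pos hα (pow_pos (norm_pos_iff.2 hv) 2)).trans_le (ha_coer v)

end LinearMap.BilinForm

namespace SaddlePoint

variable {X Y : Type*} [NormedAddCommGroup X] [NormedSpace ℝ X]
  [NormedAddCommGroup Y] [NormedSpace ℝ Y]
  {a : BilinForm ℝ X} {b : X →ₗ[ℝ] Y →ₗ[ℝ] ℝ} {α γ β : ℝ}

lemma mul_norm_le_of_infSup
    (hinfsup : ∀ q : Y, β * ‖q‖ ≤ ⨆ v : {v : X // v ≠ 0}, b v.1 q / ‖v.1‖)
    {q : Y} {c : ℝ} (hc : 0 ≤ c) (h : ∀ v, b v q ≤ c * ‖v‖) : β * ‖q‖ ≤ c :=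
  (hinfsup q).trans (iSup_div_norm_le hc h)

lemma exists_lift_of_infSup [FiniteDimensional ℝ X] [FiniteDimensional ℝ Y]
    (ha_symm : LinearMap.IsSymm a) (hα : 0 < α) (ha_coer : ∀ v, α * ‖v‖ ^ 2 ≤ a v v)
    (hβ : 0 < β) (hinfsup : ∀ q : Y, β * ‖q‖ ≤ ⨆ v : {v : X // v ≠ 0}, b v.1 q / ‖v.1‖)
    (φ : Module.Dual ℝ Y) : ∃ (w : X) (q₀ : Y), (∀ v, a w v = b v q₀) ∧ ∀ q, b w q = φ q := by
  have ha : a.Nondegenerate := a.nondegenerate_of_coercive ha_symm hα ha_coer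
  have ha_nonneg (v : X) : 0 ≤ a v v := le_trans (by positivity) (ha_coer v)
  -- `T = A⁻¹ Bᵀ`, and `S = B A⁻¹ Bᵀ` is the Schur complement
  set T : Y →ₗ[ℝ] X := (a.toDual ha).symm.toLinearMap ∘ₗ b.flip
  have hT (q : Y) (v : X) : a (T q) v = b v q :=
    a.apply_toDual_symm_apply (hB := ha) (b.flip q) v
  set S : BilinForm ℝ Y := b ∘ₗ T
  have hS (q q' : Y) : S q q' = a (T q') (T q) := (hT q' (T q)).symm
  have hS_symm : LinearMap.IsSymm S := LinearMap.isSymm_def.2 fun q q' => by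
    simp only [hS, ha_symm.eq]
  have hT_ne (q : Y) (hq : q ≠ 0) : T q ≠ 0 := by
    intro h
    have : β * ‖q‖ ≤ 0 := mul_norm_le_of_infSup hinfsup le_rfl fun v => by simp [← hT, h]
    exact hq (norm_le_zero_iff.1 (nonpos_of_mul_nonpos_right this hβ))
  have hS_nondeg : S.Nondegenerate :=
    (S.nondegenerate_iff' (fun q => hS q q ▸ ha_nonneg (T q)) hS_symm).2 fun q hq =>
      hS q q ▸ (a.nondegenerate_iff' ha_nonneg ha_symm).1 ha _ (hT_ne q hq)
  set q₀ := (S.toDual hS_nondeg).symm φ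
  exact ⟨T q₀, q₀, hT q₀, S.apply_toDual_symm_apply φ⟩

lemma apply_self_le_of_lift (ha_symm : LinearMap.IsSymm a) (ha_nonneg : ∀ v, 0 ≤ a v v)
    (hγ : 0 ≤ γ) (ha_cont : ∀ w v, a w v ≤ γ * ‖w‖ * ‖v‖) (hβ : 0 < β)
    (hinfsup : ∀ q : Y, β * ‖q‖ ≤ ⨆ v : {v : X // v ≠ 0}, b v.1 q / ‖v.1‖)
    {w : X} {q₀ : Y} (hw : ∀ v, a w v = b v q₀) {ρ : ℝ} (hρ : 0 ≤ ρ)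
    (hwq₀ : b w q₀ ≤ ρ * ‖q₀‖) : a w w ≤ γ * ρ ^ 2 / β ^ 2 := by
  have hq₀ : β * ‖q₀‖ ≤ √(γ * a w w) := mul_norm_le_of_infSup hinfsup (Real.sqrt_nonneg _)
    fun v => hw v ▸ a.apply_le_sqrt_mul_norm ha_symm ha_nonneg ha_cont w v
  have hsq : √(γ * a w w) ^ 2 = γ * a w w := Real.sq_sqrt (mul_nonneg hγ (ha_nonneg w))
  have hww : β * a w w ≤ ρ * √(γ * a w w) := by
    rw [← hw] at hwq₀
    nlinarith [mul_le_mul_of_nonneg_left hq₀ hρ]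
  rw [le_div_iff₀ (by positivity)]
  rcases (ha_nonneg w).eq_or_lt with h0 | hpos
  · rw [← h0, zero_mul]
    positivity
  · nlinarith [mul_self_le_mul_self (mul_nonneg hβ.le hpos.le) hww]

lemma exists_energy_orthogonal_split [FiniteDimensional ℝ X] [FiniteDimensional ℝ Y]
    (ha_symm : LinearMap.IsSymm a) (hα : 0 < α) (ha_coer : ∀ v, α * ‖v‖ ^ 2 ≤ a v v)
    (hγ : 0 ≤ γ) (ha_cont : ∀ w v, a w v ≤ γ * ‖w‖ * ‖v‖) (hβ : 0 < β)
    (hinfsup : ∀ q : Y, β * ‖q‖ ≤ ⨆ v : {v : X // v ≠ 0}, b v.1 q / ‖v.1‖)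
    {e : X} {ε : Y} {ρ₁ ρ₂ : ℝ} (hρ₂ : 0 ≤ ρ₂)
    (h₁ : ∀ v, a e v + b v ε ≤ ρ₁ * ‖v‖) (h₂ : ∀ q, b e q ≤ ρ₂ * ‖q‖) :
    ∃ z w : X, e = z + w ∧ a z w = 0 ∧ a z z ≤ ρ₁ * ‖z‖ ∧ a w w ≤ γ * ρ₂ ^ 2 / β ^ 2 := by
  have ha_nonneg (v : X) : 0 ≤ a v v := le_trans (by positivity) (ha_coer v)
  obtain ⟨w, q₀, hw, hbw⟩ := exists_lift_of_infSup ha_symm hα ha_coer hβ hinfsup (b e)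
  have hbz (q : Y) : b (e - w) q = 0 := by simp [hbw]
  have ha_comm (x y : X) : a x y = a y x := ha_symm.eq x y
  have hzw : a (e - w) w = 0 := by rw [ha_comm, hw, hbz]
  refine ⟨e - w, w, (sub_add_cancel e w).symm, hzw, ?_, ?_⟩
  · calc a (e - w) (e - w) = a e (e - w) + b (e - w) ε := by
          rw [hbz, map_sub, hzw, ha_comm e]
          ring
      _ ≤ ρ₁ * ‖e - w‖ := h₁ _
  · exact apply_self_le_of_lift ha_symm ha_nonneg hγ ha_cont hβ hinfsup hw hρ₂
      ((hbw q₀).trans_le (h₂ q₀))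

lemma norm_le_and_apply_self_le_of_residual [FiniteDimensional ℝ X] [FiniteDimensional ℝ Y]
    (ha_symm : LinearMap.IsSymm a) (hα : 0 < α) (ha_coer : ∀ v, α * ‖v‖ ^ 2 ≤ a v v)
    (hγ : 0 ≤ γ) (ha_cont : ∀ w v, a w v ≤ γ * ‖w‖ * ‖v‖) (hβ : 0 < β)
    (hinfsup : ∀ q : Y, β * ‖q‖ ≤ ⨆ v : {v : X // v ≠ 0}, b v.1 q / ‖v.1‖)
    {e : X} {ε : Y} {ρ₁ ρ₂ : ℝ} (hρ₁ : 0 ≤ ρ₁) (hρ₂ : 0 ≤ ρ₂)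
    (h₁ : ∀ v, a e v + b v ε ≤ ρ₁ * ‖v‖) (h₂ : ∀ q, b e q ≤ ρ₂ * ‖q‖) :
    ‖e‖ ≤ ρ₁ / α + √(γ / α) * ρ₂ / β ∧ a e e ≤ ρ₁ ^ 2 / α + γ * ρ₂ ^ 2 / β ^ 2 := by
  obtain ⟨z, w, rfl, hzw, hz, hw⟩ :=
    exists_energy_orthogonal_split ha_symm hα ha_coer hγ ha_cont hβ hinfsup hρ₂ h₁ h₂
  have hz_norm : ‖z‖ ≤ ρ₁ / α := by
    rw [le_div_iff₀ hα]
    rcases (norm_nonneg z).eq_or_lt with h0 | hpos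
    · rw [← h0, zero_mul]
      exact hρ₁
    · nlinarith [ha_coer z]
  have hw_norm : ‖w‖ ≤ √(γ / α) * ρ₂ / β := by
    have hsq : √(γ / α) * ρ₂ / β = √(γ / α * (ρ₂ / β) ^ 2) := by
      rw [Real.sqrt_mul' _ (sq_nonneg _), Real.sqrt_sq (by positivity), mul_div_assoc]
    rw [hsq, Real.le_sqrt (norm_nonneg w) (by positivity), div_mul_eq_mul_div, le_div_iff₀ hα]
    calc ‖w‖ ^ 2 * α ≤ a w w := by linarith [ha_coer w]
      _ ≤ γ * (ρ₂ / β) ^ 2 := by rwa [div_pow, ← mul_div_assoc]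
  have hwz : a w z = 0 := (ha_symm.eq z w).symm.trans hzw
  refine ⟨(norm_add_le z w).trans (add_le_add hz_norm hw_norm), ?_⟩
  calc a (z + w) (z + w) = a z z + a w w := by simp [hzw, hwz]
    _ ≤ ρ₁ * (ρ₁ / α) + γ * ρ₂ ^ 2 / β ^ 2 := by gcongr; exact hz.trans (by gcongr)
    _ = ρ₁ ^ 2 / α + γ * ρ₂ ^ 2 / β ^ 2 := by ring

lemma mul_norm_le_add_sqrt_of_residual (ha_symm : LinearMap.IsSymm a)
    (ha_nonneg : ∀ v, 0 ≤ a v v) (ha_cont : ∀ w v, a w v ≤ γ * ‖w‖ * ‖v‖)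
    (hinfsup : ∀ q : Y, β * ‖q‖ ≤ ⨆ v : {v : X // v ≠ 0}, b v.1 q / ‖v.1‖)
    {e : X} {ε : Y} {ρ₁ : ℝ} (hρ₁ : 0 ≤ ρ₁) (h₁ : ∀ v, a e v + b v ε ≤ ρ₁ * ‖v‖) :
    β * ‖ε‖ ≤ ρ₁ + √(γ * a e e) := by
  refine mul_norm_le_of_infSup hinfsup (by positivity) fun v => ?_
  have hneg := a.apply_le_sqrt_mul_norm ha_symm ha_nonneg ha_cont (-e) v
  simp only [map_neg, LinearMap.neg_apply, neg_neg] at hneg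
  linarith [h₁ v]

theorem norm_error_le_of_residual [FiniteDimensional ℝ X] [FiniteDimensional ℝ Y]
    (ha_symm : LinearMap.IsSymm a) (hα : 0 < α) (ha_coer : ∀ v, α * ‖v‖ ^ 2 ≤ a v v)
    (hγ : 0 ≤ γ) (ha_cont : ∀ w v, a w v ≤ γ * ‖w‖ * ‖v‖) (hβ : 0 < β)
    (hinfsup : ∀ q : Y, β * ‖q‖ ≤ ⨆ v : {v : X // v ≠ 0}, b v.1 q / ‖v.1‖)
    {e : X} {ε : Y} {ρ₁ ρ₂ : ℝ} (hρ₁ : 0 ≤ ρ₁) (hρ₂ : 0 ≤ ρ₂)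
    (h₁ : ∀ v, a e v + b v ε ≤ ρ₁ * ‖v‖) (h₂ : ∀ q, b e q ≤ ρ₂ * ‖q‖) :
    ‖e‖ ≤ ρ₁ / α + √(γ / α) * ρ₂ / β ∧
      ‖ε‖ ≤ (1 + √(γ / α)) * ρ₁ / β + γ / β ^ 2 * ρ₂ := by
  obtain ⟨he, hee⟩ :=
    norm_le_and_apply_self_le_of_residual ha_symm hα ha_coer hγ ha_cont hβ hinfsup hρ₁ hρ₂ h₁ h₂
  refine ⟨he, ?_⟩
  have hdual := mul_norm_le_add_sqrt_of_residual ha_symm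
    (fun v => le_trans (by positivity) (ha_coer v)) ha_cont hinfsup hρ₁ h₁
  have hsqrt : √(γ * a e e) ≤ √(γ / α) * ρ₁ + γ * ρ₂ / β := by
    rw [Real.sqrt_le_left (by positivity)]
    have hs : √(γ / α) ^ 2 = γ / α := Real.sq_sqrt (by positivity)
    calc γ * a e e ≤ γ * (ρ₁ ^ 2 / α + γ * ρ₂ ^ 2 / β ^ 2) := by gcongr
      _ = (√(γ / α) * ρ₁) ^ 2 + (γ * ρ₂ / β) ^ 2 := by rw [mul_pow, hs]; ring
      _ ≤ (√(γ / α) * ρ₁ + γ * ρ₂ / β) ^ 2 := by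
        nlinarith [mul_nonneg (mul_nonneg (Real.sqrt_nonneg (γ / α)) hρ₁)
          (by positivity : 0 ≤ γ * ρ₂ / β)]
  have hΔp : (1 + √(γ / α)) * ρ₁ / β + γ / β ^ 2 * ρ₂
      = (ρ₁ + (√(γ / α) * ρ₁ + γ * ρ₂ / β)) / β := by
    field_simp
    ring
  rw [hΔp, le_div_iff₀ hβ]
  linarith

end SaddlePoint

theorem stmt7_general
  {X Y : Type*} [NormedAddCommGroup X] [InnerProductSpace ℝ X] [FiniteDimensional ℝ X]
  [NormedAddCommGroup Y] [InnerProductSpace ℝ Y] [FiniteDimensional ℝ Y]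
  (a : X →ₗ[ℝ] X →ₗ[ℝ] ℝ) (b : X →ₗ[ℝ] Y →ₗ[ℝ] ℝ)
  (ha_symm : ∀ w v : X, a w v = a v w)
  (αa γa : ℝ) (hαa : 0 < αa) (hγa : 0 < γa)
  (ha_coer : ∀ v : X, αa * ‖v‖ ^ 2 ≤ a v v)
  (ha_cont : ∀ w v : X, a w v ≤ γa * ‖w‖ * ‖v‖)
  (β : ℝ) (hβ : 0 < β)
  (hinfsup : ∀ q : Y, β * ‖q‖ ≤ ⨆ v : {v : X // v ≠ 0}, b v.1 q / ‖v.1‖)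
  (f : X →ₗ[ℝ] ℝ) (g : Y →ₗ[ℝ] ℝ)
  (u : X) (p : Y)
  (htruth1 : ∀ v : X, a u v + b v p = f v)
  (htruth2 : ∀ q : Y, b u q = g q)
  (uN : X) (pN : Y)
:
    Real.sqrt (‖u - uN‖ ^ 2 + ‖p - pN‖ ^ 2) ≤ Real.sqrt (((⨆ v : {v : X // v ≠ 0}, (f v.1 - a uN v.1 - b v.1 pN) / ‖v.1‖) / αa + Real.sqrt (γa / αa) * (⨆ q : {q : Y // q ≠ 0}, (g q.1 - b uN q.1) / ‖q.1‖) / β) ^ 2 + ((1 + Real.sqrt (γa / αa)) * (⨆ v : {v : X // v ≠ 0}, (f v.1 - a uN v.1 - b v.1 pN) / ‖v.1‖) / β + (γa / β ^ 2) * (⨆ q : {q : Y // q ≠ 0}, (g q.1 - b uN q.1) / ‖q.1‖)) ^ 2) := by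
  set r₁ := LinearMap.toContinuousLinearMap (f - a uN - b.flip pN)
  set r₂ := LinearMap.toContinuousLinearMap (g - b uN)
  have hr₁ : ⨆ v : {v : X // v ≠ 0}, (f v.1 - a uN v.1 - b v.1 pN) / ‖v.1‖ = ‖r₁‖ :=
    r₁.iSup_div_norm_eq_norm
  have hr₂ : ⨆ q : {q : Y // q ≠ 0}, (g q.1 - b uN q.1) / ‖q.1‖ = ‖r₂‖ :=
    r₂.iSup_div_norm_eq_norm
  obtain ⟨hu, hp⟩ := SaddlePoint.norm_error_le_of_residual (LinearMap.isSymm_def.2 ha_symm)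
    hαa ha_coer hγa.le ha_cont hβ hinfsup (e := u - uN) (ε := p - pN) (norm_nonneg r₁) (norm_nonneg r₂)
    (fun v => calc a (u - uN) v + b v (p - pN) = r₁ v := by simp [r₁, ← htruth1]; ring
      _ ≤ ‖r₁‖ * ‖v‖ := (le_abs_self _).trans (r₁.le_opNorm v))
    (fun q => calc b (u - uN) q = r₂ q := by simp [r₂, ← htruth2]
      _ ≤ ‖r₂‖ * ‖q‖ := (le_abs_self _).trans (r₂.le_opNorm q))
  rw [hr₁, hr₂]
  gcongr

theorem stmt7
  {X Y : Type*} [NormedAddCommGroup X] [InnerProductSpace ℝ X] [FiniteDimensional ℝ X]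
  [NormedAddCommGroup Y] [InnerProductSpace ℝ Y] [FiniteDimensional ℝ Y]
  (a : X →ₗ[ℝ] X →ₗ[ℝ] ℝ) (b : X →ₗ[ℝ] Y →ₗ[ℝ] ℝ)
  (ha_symm : ∀ w v : X, a w v = a v w)
  (αa γa : ℝ) (hαa : 0 < αa) (hγa : 0 < γa)
  (ha_coer : ∀ v : X, αa * ‖v‖ ^ 2 ≤ a v v)
  (ha_cont : ∀ w v : X, a w v ≤ γa * ‖w‖ * ‖v‖)
  (β : ℝ) (hβ : 0 < β)
  (hinfsup : ∀ q : Y, β * ‖q‖ ≤ ⨆ v : {v : X // v ≠ 0}, b v.1 q / ‖v.1‖)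
  (f : X →ₗ[ℝ] ℝ) (g : Y →ₗ[ℝ] ℝ)
  (u : X) (p : Y)
  (htruth1 : ∀ v : X, a u v + b v p = f v)
  (htruth2 : ∀ q : Y, b u q = g q)
  (XN : Submodule ℝ X) (YN : Submodule ℝ Y)
  (uN : X) (pN : Y) (huN : uN ∈ XN) (hpN : pN ∈ YN)
  (hrb1 : ∀ v ∈ XN, a uN v + b v pN = f v)
  (hrb2 : ∀ q ∈ YN, b uN q = g q)
:
    Real.sqrt (‖u - uN‖ ^ 2 + ‖p - pN‖ ^ 2) ≤ Real.sqrt (((⨆ v : {v : X // v ≠ 0}, (f v.1 - a uN v.1 - b v.1 pN) / ‖v.1‖) / αa + Real.sqrt (γa / αa) * (⨆ q : {q : Y // q ≠ 0}, (g q.1 - b uN q.1) / ‖q.1‖) / β) ^ 2 + ((1 + Real.sqrt (γa / αa)) * (⨆ v : {v : X // v ≠ 0}, (f v.1 - a uN v.1 - b v.1 pN) / ‖v.1‖) / β + (γa / β ^ 2) * (⨆ q : {q : Y // q ≠ 0}, (g q.1 - b uN q.1) / ‖q.1‖)) ^ 2) :=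
  stmt7_general a b ha_symm αa γa hαa hγa ha_coer ha_cont β hβ hinfsup f g u p htruth1 htruth2 uN pN
end

section
/- The error in the primal variable satisfies the energy-norm a posteriori bound ‖u - u_N‖_{X,a} ≤ ‖r¹‖_{X'}/√α_a + (√γ_a/β)·‖r²‖_{Y'}, where ‖v‖_{X,a} = √(a(v,v)) is the energy norm. -/
/-! The error `e = u - u_N` splits as `e = z + w`, where the inf-sup condition provides `w`
with `b(w, ·) = r²` and `β ‖w‖_X ≤ ‖r²‖_{Y'}`. Then `b(z, ·) = 0`, so the pressure terms drop out
of the first residual and `a(e, z) = r¹(z) ≤ (‖r¹‖_{X'}/√α_a) ‖z‖_{X,a}`. For the symmetric positive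
form `a` this forces `‖e‖_{X,a} ≤ ‖r¹‖_{X'}/√α_a + ‖w‖_{X,a}`, and continuity bounds
`‖w‖_{X,a} ≤ √γ_a ‖w‖_X ≤ (√γ_a/β) ‖r²‖_{Y'}`. -/

open scoped RealInnerProductSpace

theorem sqrt_mul_norm_le_sqrt {E : Type*} [SeminormedAddCommGroup E] {c s : ℝ} {v : E}
    (h : c * ‖v‖ ^ 2 ≤ s) : √c * ‖v‖ ≤ √s := by
  simpa [Real.sqrt_mul' c (sq_nonneg ‖v‖)] using Real.sqrt_le_sqrt h

theorem sqrt_le_sqrt_mul_norm {E : Type*} [SeminormedAddCommGroup E] {c s : ℝ} {v : E}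
    (h : s ≤ c * ‖v‖ ^ 2) : √s ≤ √c * ‖v‖ := by
  simpa [Real.sqrt_mul' c (sq_nonneg ‖v‖)] using Real.sqrt_le_sqrt h

section DualNorm

variable {E : Type*} [NormedAddCommGroup E] [NormedSpace ℝ E] [FiniteDimensional ℝ E]

noncomputable def dualNorm (h : E →ₗ[ℝ] ℝ) : ℝ :=
  ⨆ v : {v : E // v ≠ 0}, h v.1 / ‖v.1‖

theorem dualNorm_eq_opNorm (h : E →ₗ[ℝ] ℝ) :
    dualNorm h = ‖LinearMap.toContinuousLinearMap h‖ := by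
  set φ := LinearMap.toContinuousLinearMap h
  have hle : ∀ v : E, h v / ‖v‖ ≤ ‖φ‖ := fun v =>
    div_le_of_le_mul₀ (norm_nonneg _) (norm_nonneg _) ((le_abs_self _).trans (φ.le_opNorm v))
  have hbdd : BddAbove (Set.range fun v : {v : E // v ≠ 0} => h v.1 / ‖v.1‖) :=
    ⟨‖φ‖, by rintro _ ⟨v, rfl⟩; exact hle v.1⟩
  have habs : ∀ v : E, v ≠ 0 → |h v| ≤ dualNorm h * ‖v‖ := by
    intro v hv
    have hv' : 0 < ‖v‖ := norm_pos_iff.mpr hv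
    have hpos := le_ciSup hbdd ⟨v, hv⟩
    have hneg := le_ciSup hbdd ⟨-v, neg_ne_zero.mpr hv⟩
    simp only [map_neg, norm_neg] at hneg
    rw [abs_le, neg_le]
    exact ⟨(div_le_iff₀ hv').mp hneg, (div_le_iff₀ hv').mp hpos⟩
  have hnonneg : 0 ≤ dualNorm h := by
    rcases isEmpty_or_nonempty {v : E // v ≠ 0} with hE | ⟨v, hv⟩
    · exact (Real.iSup_of_isEmpty _).ge
    · exact nonneg_of_mul_nonneg_left ((abs_nonneg _).trans (habs v hv)) (norm_pos_iff.mpr hv)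
  exact le_antisymm (Real.iSup_le (fun v => hle v.1) (norm_nonneg _))
    (φ.opNorm_le_bound' hnonneg fun v hv => habs v (norm_ne_zero_iff.mp hv))

theorem dualNorm_nonneg (h : E →ₗ[ℝ] ℝ) : 0 ≤ dualNorm h :=
  (dualNorm_eq_opNorm h).ge.trans' (norm_nonneg _)

theorem apply_le_dualNorm_mul_norm (h : E →ₗ[ℝ] ℝ) (v : E) : h v ≤ dualNorm h * ‖v‖ := by
  rw [dualNorm_eq_opNorm]
  exact (le_abs_self _).trans ((LinearMap.toContinuousLinearMap h).le_opNorm v)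

theorem apply_le_dualNorm_div_sqrt_mul_sqrt (h : E →ₗ[ℝ] ℝ) {α s : ℝ} {v : E} (hα : 0 < α)
    (hv : α * ‖v‖ ^ 2 ≤ s) : h v ≤ dualNorm h / √α * √s :=
  calc h v ≤ dualNorm h * ‖v‖ := apply_le_dualNorm_mul_norm h v
  _ = dualNorm h / √α * (√α * ‖v‖) := by field_simp
  _ ≤ dualNorm h / √α * √s := by
    gcongr
    · exact div_nonneg (dualNorm_nonneg h) (Real.sqrt_nonneg α)
    · exact sqrt_mul_norm_le_sqrt hv

end DualNorm

section Riesz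

variable {E : Type*} [NormedAddCommGroup E] [InnerProductSpace ℝ E] [FiniteDimensional ℝ E]

noncomputable def rieszMap : (E →ₗ[ℝ] ℝ) →ₗ[ℝ] E where
  toFun h := (InnerProductSpace.toDual ℝ E).symm (LinearMap.toContinuousLinearMap h)
  map_add' h₁ h₂ := by simp
  map_smul' c h := by simp

theorem inner_rieszMap_left (h : E →ₗ[ℝ] ℝ) (v : E) : ⟪rieszMap h, v⟫ = h v := by
  simp [rieszMap]

theorem norm_rieszMap (h : E →ₗ[ℝ] ℝ) : ‖rieszMap h‖ = dualNorm h := by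
  simp [rieszMap, dualNorm_eq_opNorm]

end Riesz

theorem exists_apply_eq_and_norm_le_of_infSup
    {X Y : Type*} [NormedAddCommGroup X] [InnerProductSpace ℝ X] [FiniteDimensional ℝ X]
    [NormedAddCommGroup Y] [InnerProductSpace ℝ Y] [FiniteDimensional ℝ Y]
    (b : X →ₗ[ℝ] Y →ₗ[ℝ] ℝ) {β : ℝ} (hβ : 0 < β)
    (hinfsup : ∀ q : Y, β * ‖q‖ ≤ dualNorm (b.flip q)) (ℓ : Y →ₗ[ℝ] ℝ) :
    ∃ w : X, b w = ℓ ∧ β * ‖w‖ ≤ dualNorm ℓ := by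
  -- `B'` is the adjoint of `v ↦ b v`, bounded below by the inf-sup condition; hence `b ∘ B'` is
  -- invertible and `w` is taken in the range of `B'`, where `‖w‖² = ℓ s ≤ ‖ℓ‖ ‖w‖ / β`.
  set B' : Y →ₗ[ℝ] X := rieszMap ∘ₗ b.flip
  have hB' : ∀ q v, ⟪B' q, v⟫ = b v q := fun q v => inner_rieszMap_left (b.flip q) v
  have hB'_bound : ∀ q, β * ‖q‖ ≤ ‖B' q‖ := fun q => (hinfsup q).trans_eq (norm_rieszMap _).symm
  set G : Y →ₗ[ℝ] Y := rieszMap ∘ₗ b ∘ₗ B'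
  have hG : ∀ s q, ⟪G s, q⟫ = b (B' s) q := fun s q => inner_rieszMap_left (b (B' s)) q
  have hG_inj : Function.Injective G := by
    rw [← LinearMap.ker_eq_bot, LinearMap.ker_eq_bot']
    intro s hs
    have hB's : B' s = 0 := by
      rw [← inner_self_eq_zero (𝕜 := ℝ), hB', ← hG, hs, inner_zero_left]
    have := hB'_bound s
    rw [hB's, norm_zero] at this
    exact norm_le_zero_iff.mp (nonpos_of_mul_nonpos_right this hβ)
  obtain ⟨s, hs⟩ := LinearMap.injective_iff_surjective.mp hG_inj (rieszMap ℓ)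
  have hbw : b (B' s) = ℓ := LinearMap.ext fun q => by rw [← hG, hs, inner_rieszMap_left]
  refine ⟨B' s, hbw, ?_⟩
  have hsq : ‖B' s‖ ^ 2 = ℓ s := by rw [← real_inner_self_eq_norm_sq, hB', hbw]
  have hℓs := apply_le_dualNorm_mul_norm ℓ s
  have hs_bound := hB'_bound s
  have hD := dualNorm_nonneg ℓ
  rcases (norm_nonneg (B' s)).eq_or_lt with hw | hw
  · rw [← hw, mul_zero]; exact hD
  · refine le_of_mul_le_mul_right ?_ hw
    nlinarith

section SymmetricForm

variable {X : Type*} [AddCommGroup X] [Module ℝ X] (a : X →ₗ[ℝ] X →ₗ[ℝ] ℝ)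
  (ha_symm : ∀ w v : X, a w v = a v w) (ha_nonneg : ∀ v : X, 0 ≤ a v v)
include ha_symm ha_nonneg

theorem sq_apply_le_mul_apply_self (x y : X) : a x y ^ 2 ≤ a x x * a y y := by
  have hdiscrim : discrim (a y y) (2 * a x y) (a x x) ≤ 0 := by
    refine discrim_le_zero fun t => ?_
    have := ha_nonneg (x + t • y)
    simp only [map_add, map_smul, LinearMap.add_apply, LinearMap.smul_apply, smul_eq_mul,
      ha_symm y x] at this
    linarith
  rw [discrim] at hdiscrim
  linarith

theorem apply_le_sqrt_mul_sqrt (x y : X) : a x y ≤ √(a x x) * √(a y y) := by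
  rw [← Real.sqrt_mul (ha_nonneg x)]
  exact (le_abs_self _).trans (Real.abs_le_sqrt (sq_apply_le_mul_apply_self a ha_symm ha_nonneg x y))

theorem sqrt_apply_self_le_of_apply_sub_le {e w : X} {A : ℝ} (hA : 0 ≤ A)
    (h : a e (e - w) ≤ A * √(a (e - w) (e - w))) : √(a e e) ≤ A + √(a w w) := by
  set z := e - w
  have hz : e = z + w := (sub_add_cancel e w).symm
  have hCS := apply_le_sqrt_mul_sqrt a ha_symm ha_nonneg
  have hZ := Real.sq_sqrt (ha_nonneg z)
  have hE := Real.sq_sqrt (ha_nonneg e)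
  have hwz : -(√(a w w) * √(a z z)) ≤ a w z := neg_le.mp (by simpa using hCS w (-z))
  have hZ_le : √(a z z) ≤ A + √(a w w) := by
    have : a e z = a z z + a w z := by rw [hz, map_add, LinearMap.add_apply]
    nlinarith [Real.sqrt_nonneg (a z z), Real.sqrt_nonneg (a w w)]
  have hEE : a e e = a e z + a w e := by
    conv_lhs => rw [hz, map_add, ← hz]
    rw [ha_symm e w]
  -- `‖e‖² ≤ A ‖z‖ + ‖w‖ ‖e‖ ≤ A (A + ‖w‖) + ‖w‖ ‖e‖`, i.e. `(‖e‖ - A - ‖w‖) (‖e‖ + A) ≤ 0`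
  nlinarith [hCS w e, Real.sqrt_nonneg (a e e), Real.sqrt_nonneg (a w w),
    mul_le_mul_of_nonneg_left hZ_le hA]

end SymmetricForm

theorem stmt11_general
  {X Y : Type*} [NormedAddCommGroup X] [InnerProductSpace ℝ X] [FiniteDimensional ℝ X]
  [NormedAddCommGroup Y] [InnerProductSpace ℝ Y] [FiniteDimensional ℝ Y]
  (a : X →ₗ[ℝ] X →ₗ[ℝ] ℝ) (b : X →ₗ[ℝ] Y →ₗ[ℝ] ℝ)
  (ha_symm : ∀ w v : X, a w v = a v w)
  (αa γa : ℝ) (hαa : 0 < αa)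
  (ha_coer : ∀ v : X, αa * ‖v‖ ^ 2 ≤ a v v)
  (ha_cont : ∀ w v : X, a w v ≤ γa * ‖w‖ * ‖v‖)
  (β : ℝ) (hβ : 0 < β)
  (hinfsup : ∀ q : Y, β * ‖q‖ ≤ ⨆ v : {v : X // v ≠ 0}, b v.1 q / ‖v.1‖)
  (f : X →ₗ[ℝ] ℝ) (g : Y →ₗ[ℝ] ℝ)
  (u : X) (p : Y)
  (htruth1 : ∀ v : X, a u v + b v p = f v)
  (htruth2 : ∀ q : Y, b u q = g q)
  (uN : X) (pN : Y)
:
    Real.sqrt (a (u - uN) (u - uN)) ≤ (⨆ v : {v : X // v ≠ 0}, (f v.1 - a uN v.1 - b v.1 pN) / ‖v.1‖) / Real.sqrt αa + (Real.sqrt γa / β) * (⨆ q : {q : Y // q ≠ 0}, (g q.1 - b uN q.1) / ‖q.1‖) := by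
  set r₁ : X →ₗ[ℝ] ℝ := f - a uN - b.flip pN
  set r₂ : Y →ₗ[ℝ] ℝ := g - b uN
  change √(a (u - uN) (u - uN)) ≤ dualNorm r₁ / √αa + √γa / β * dualNorm r₂
  have ha_nonneg : ∀ v, 0 ≤ a v v := fun v => (by positivity : 0 ≤ αa * ‖v‖ ^ 2).trans (ha_coer v)
  obtain ⟨w, hbw, hw⟩ := exists_apply_eq_and_norm_le_of_infSup b hβ hinfsup r₂
  set e := u - uN
  have hbz : b (e - w) = 0 := by
    ext q
    simp [e, hbw, r₂, htruth2]
  have hresidual : ∀ v, r₁ v = a e v + b v (p - pN) := fun v => by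
    simp only [r₁, e, LinearMap.sub_apply, LinearMap.flip_apply, map_sub, ← htruth1 v]
    ring
  have hr₁_eq : a e (e - w) = r₁ (e - w) := by
    rw [hresidual, hbz, LinearMap.zero_apply, add_zero]
  calc √(a e e) ≤ dualNorm r₁ / √αa + √(a w w) :=
        sqrt_apply_self_le_of_apply_sub_le a ha_symm ha_nonneg
          (div_nonneg (dualNorm_nonneg _) (Real.sqrt_nonneg _)) (hr₁_eq.trans_le
            (apply_le_dualNorm_div_sqrt_mul_sqrt r₁ hαa (ha_coer _)))
  _ ≤ dualNorm r₁ / √αa + √γa * ‖w‖ := by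
      gcongr
      exact sqrt_le_sqrt_mul_norm ((ha_cont w w).trans_eq (by ring))
  _ ≤ dualNorm r₁ / √αa + √γa / β * dualNorm r₂ := by
      gcongr dualNorm r₁ / √αa + ?_
      rw [div_mul_eq_mul_div, le_div_iff₀ hβ, mul_assoc]
      gcongr
      linarith

theorem stmt11
  {X Y : Type*} [NormedAddCommGroup X] [InnerProductSpace ℝ X] [FiniteDimensional ℝ X]
  [NormedAddCommGroup Y] [InnerProductSpace ℝ Y] [FiniteDimensional ℝ Y]
  (a : X →ₗ[ℝ] X →ₗ[ℝ] ℝ) (b : X →ₗ[ℝ] Y →ₗ[ℝ] ℝ)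
  (ha_symm : ∀ w v : X, a w v = a v w)
  (αa γa : ℝ) (hαa : 0 < αa) (hγa : 0 < γa)
  (ha_coer : ∀ v : X, αa * ‖v‖ ^ 2 ≤ a v v)
  (ha_cont : ∀ w v : X, a w v ≤ γa * ‖w‖ * ‖v‖)
  (β : ℝ) (hβ : 0 < β)
  (hinfsup : ∀ q : Y, β * ‖q‖ ≤ ⨆ v : {v : X // v ≠ 0}, b v.1 q / ‖v.1‖)
  (f : X →ₗ[ℝ] ℝ) (g : Y →ₗ[ℝ] ℝ)
  (u : X) (p : Y)
  (htruth1 : ∀ v : X, a u v + b v p = f v)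
  (htruth2 : ∀ q : Y, b u q = g q)
  (XN : Submodule ℝ X) (YN : Submodule ℝ Y)
  (uN : X) (pN : Y) (huN : uN ∈ XN) (hpN : pN ∈ YN)
  (hrb1 : ∀ v ∈ XN, a uN v + b v pN = f v)
  (hrb2 : ∀ q ∈ YN, b uN q = g q)
:
    Real.sqrt (a (u - uN) (u - uN)) ≤ (⨆ v : {v : X // v ≠ 0}, (f v.1 - a uN v.1 - b v.1 pN) / ‖v.1‖) / Real.sqrt αa + (Real.sqrt γa / β) * (⨆ q : {q : Y // q ≠ 0}, (g q.1 - b uN q.1) / ‖q.1‖) :=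
  stmt11_general a b ha_symm αa γa hαa ha_coer ha_cont β hβ hinfsup f g u p htruth1 htruth2 uN pN
end
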